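/- arXiv:2503.12965 — 3 statements merged into one kernel-verified Lean document; each statement's English description precedes it below -/
import Mathlib

section
/- For any subordination algebra (A, ≺), the operation a ⇒_≺ b := ⋁{c ∈ A | a ∧ c ≺ b} satisfies (a₁ ∨ a₂) ⇒_≺ b = (a₁ ⇒_≺ b) ∧ (a₂ ⇒_≺ b) and ⊥ ⇒_≺ b = ⊤ for all a₁, a₂, b ∈ A. -/
/-- A subordination algebra relation on a bounded distributive lattice. -/
structure SubordAlg (A : Type*) [DistribLattice A] [BoundedOrder A] where
  prec : A → A → Prop
  prec_bot : prec ⊥ ⊥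
  prec_top : prec ⊤ ⊤
  prec_and : ∀ {a b c : A}, prec a b → prec a c → prec a (b ⊓ c)
  prec_or : ∀ {a b c : A}, prec a c → prec b c → prec (a ⊔ b) c
  prec_wosi : ∀ {a b c d : A}, a ≤ b → prec b c → c ≤ d → prec a d

/-- A presentation of the canonical extension of a bounded (distributive) lattice `A`:
a complete lattice `Aδ` together with a dense and compact lattice embedding. -/
structure CanExt (A : Type*) [DistribLattice A] [BoundedOrder A]
    (Aδ : Type*) [CompleteLattice Aδ] where
  e : A → Aδ
  le_iff : ∀ a b : A, a ≤ b ↔ e a ≤ e b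
  map_inf : ∀ a b : A, e (a ⊓ b) = e a ⊓ e b
  map_sup : ∀ a b : A, e (a ⊔ b) = e a ⊔ e b
  map_bot : e ⊥ = ⊥
  map_top : e ⊤ = ⊤
  dense_closed : ∀ u : Aδ,
    u = sSup {k | (∃ F : Set A, F.Nonempty ∧ k = sInf (e '' F)) ∧ k ≤ u}
  dense_open : ∀ u : Aδ,
    u = sInf {o | (∃ I : Set A, I.Nonempty ∧ o = sSup (e '' I)) ∧ u ≤ o}
  compact : ∀ F I : Set A, F.Nonempty → I.Nonempty →
    sInf (e '' F) ≤ sSup (e '' I) →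
    ∃ F' I' : Set A, F' ⊆ F ∧ I' ⊆ I ∧ F'.Finite ∧ I'.Finite ∧
      sInf (e '' F') ≤ sSup (e '' I')

/-- Closed elements of the canonical extension: meets of nonempty subsets of `A`. -/
def CanExt.IsClosed {A : Type*} [DistribLattice A] [BoundedOrder A]
    {Aδ : Type*} [CompleteLattice Aδ] (C : CanExt A Aδ) (k : Aδ) : Prop :=
  ∃ F : Set A, F.Nonempty ∧ k = sInf (C.e '' F)

/-- Open elements of the canonical extension: joins of nonempty subsets of `A`. -/
def CanExt.IsOpen {A : Type*} [DistribLattice A] [BoundedOrder A]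
    {Aδ : Type*} [CompleteLattice Aδ] (C : CanExt A Aδ) (o : Aδ) : Prop :=
  ∃ I : Set A, I.Nonempty ∧ o = sSup (C.e '' I)

/-- The slanted implication `a ⇒_≺ b := ⋁{c | a ⊓ c ≺ b}` induced by a relation. -/
def slantImp {A : Type*} [DistribLattice A] [BoundedOrder A]
    {Aδ : Type*} [CompleteLattice Aδ] (C : CanExt A Aδ)
    (R : A → A → Prop) (a b : A) : Aδ :=
  sSup (C.e '' {c | R (a ⊓ c) b})

/-- The slanted co-implication `a ⩾_≺ b := ⋀{c | b ≺ a ⊔ c}` induced by a relation. -/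
def slantCoimp {A : Type*} [DistribLattice A] [BoundedOrder A]
    {Aδ : Type*} [CompleteLattice Aδ] (C : CanExt A Aδ)
    (R : A → A → Prop) (a b : A) : Aδ :=
  sInf (C.e '' {c | R b (a ⊔ c)})

/-- The slanted negation `¬a := ⋁{c | a ⊓ c ≺ ⊥}`. -/
def slantNeg {A : Type*} [DistribLattice A] [BoundedOrder A]
    {Aδ : Type*} [CompleteLattice Aδ] (C : CanExt A Aδ)
    (R : A → A → Prop) (a : A) : Aδ :=
  sSup (C.e '' {c | R (a ⊓ c) ⊥})

/-- The slanted co-negation `∼a := ⋀{c | ⊤ ≺ a ⊔ c}`. -/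
def slantSim {A : Type*} [DistribLattice A] [BoundedOrder A]
    {Aδ : Type*} [CompleteLattice Aδ] (C : CanExt A Aδ)
    (R : A → A → Prop) (a : A) : Aδ :=
  sInf (C.e '' {c | R ⊤ (a ⊔ c)})

/-- A slanted Heyting algebra over a canonical extension `C`. -/
structure SlantedHeyting (A : Type*) [DistribLattice A] [BoundedOrder A]
    (Aδ : Type*) [CompleteLattice Aδ] (C : CanExt A Aδ) where
  imp : A → A → Aδ
  imp_open : ∀ a b : A, C.IsOpen (imp a b)
  imp_inf : ∀ a b₁ b₂ : A, imp a (b₁ ⊓ b₂) = imp a b₁ ⊓ imp a b₂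
  imp_top : ∀ a : A, imp a ⊤ = ⊤
  sup_imp : ∀ a₁ a₂ b : A, imp (a₁ ⊔ a₂) b = imp a₁ b ⊓ imp a₂ b
  bot_imp : ∀ b : A, imp ⊥ b = ⊤
  resid : ∀ a b c : A, C.e c ≤ imp a b ↔ C.e (a ⊓ c) ≤ imp ⊤ b

/-- A slanted co-Heyting algebra over a canonical extension `C`. -/
structure SlantedCoHeyting (A : Type*) [DistribLattice A] [BoundedOrder A]
    (Aδ : Type*) [CompleteLattice Aδ] (C : CanExt A Aδ) where
  coimp : A → A → Aδ
  coimp_closed : ∀ a b : A, C.IsClosed (coimp a b)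
  coimp_sup : ∀ a b₁ b₂ : A, coimp a (b₁ ⊔ b₂) = coimp a b₁ ⊔ coimp a b₂
  coimp_bot : ∀ a : A, coimp a ⊥ = ⊥
  inf_coimp : ∀ a₁ a₂ b : A, coimp (a₁ ⊓ a₂) b = coimp a₁ b ⊔ coimp a₂ b
  top_coimp : ∀ b : A, coimp ⊤ b = ⊥
  resid : ∀ a b c : A, coimp a b ≤ C.e c ↔ coimp ⊥ b ≤ C.e (a ⊔ c)

/-- The π-extension of a slanted implication on a closed first argument and open
second argument: `k ⇒^π o := ⋁{a ⇒ b | k ≤ a, b ≤ o}`. -/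
def impPiKO {A : Type*} [DistribLattice A] [BoundedOrder A]
    {Aδ : Type*} [CompleteLattice Aδ] {C : CanExt A Aδ}
    (H : SlantedHeyting A Aδ C) (k o : Aδ) : Aδ :=
  sSup {u | ∃ a b : A, u = H.imp a b ∧ k ≤ C.e a ∧ C.e b ≤ o}

/-- The π-extension of a slanted implication on arbitrary arguments. -/
def impPi {A : Type*} [DistribLattice A] [BoundedOrder A]
    {Aδ : Type*} [CompleteLattice Aδ] {C : CanExt A Aδ}
    (H : SlantedHeyting A Aδ C) (u v : Aδ) : Aδ :=
  sInf {w | ∃ k o : Aδ, C.IsClosed k ∧ C.IsOpen o ∧ k ≤ u ∧ v ≤ o ∧ w = impPiKO H k o}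

/-! The elements `c` with `a ⊓ c ≺ b` form an ideal of `A`, and `a ⇒_≺ b` is the join of that
ideal in `Aδ`. By (OR) and distributivity the ideal for `a₁ ⊔ a₂` is the intersection of the
ideals for `a₁` and `a₂`, and the ideal for `⊥` is all of `A`. Joins of ideals in the canonical
extension turn intersections into meets: by density it suffices to test closed elements, and by
compactness a closed element below the join of an ideal lies below a single member of it. -/

namespace SubordAlg

variable {A : Type*} [DistribLattice A] [BoundedOrder A] (S : SubordAlg A)

lemma prec_bot_left (b : A) : S.prec ⊥ b :=
  S.prec_wosi le_rfl S.prec_bot bot_le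

lemma prec_anti_left {a a' b : A} (h : a ≤ a') (h' : S.prec a' b) : S.prec a b :=
  S.prec_wosi h h' le_rfl

lemma prec_sup_left_iff {a₁ a₂ b : A} : S.prec (a₁ ⊔ a₂) b ↔ S.prec a₁ b ∧ S.prec a₂ b :=
  ⟨fun h => ⟨S.prec_anti_left le_sup_left h, S.prec_anti_left le_sup_right h⟩,
    fun h => S.prec_or h.1 h.2⟩

def impIdeal (a b : A) : Order.Ideal A where
  carrier := {c | S.prec (a ⊓ c) b}
  lower' _ _ hcd hd := S.prec_anti_left (inf_le_inf_left a hcd) hd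
  nonempty' := ⟨⊥, by simpa using S.prec_bot_left b⟩
  directed' c hc d hd := ⟨c ⊔ d, by
    show S.prec (a ⊓ (c ⊔ d)) b
    rw [inf_sup_left]
    exact S.prec_or hc hd, le_sup_left, le_sup_right⟩

lemma mem_impIdeal {a b c : A} : c ∈ S.impIdeal a b ↔ S.prec (a ⊓ c) b := Iff.rfl

lemma impIdeal_sup_left (a₁ a₂ b : A) :
    S.impIdeal (a₁ ⊔ a₂) b = S.impIdeal a₁ b ⊓ S.impIdeal a₂ b := by
  refine SetLike.ext fun c => ?_
  simp only [Order.Ideal.mem_inf, mem_impIdeal, inf_sup_right, S.prec_sup_left_iff]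

lemma impIdeal_bot_left (b : A) : S.impIdeal ⊥ b = ⊤ := by
  refine SetLike.ext fun c => iff_of_true ?_ trivial
  simpa [mem_impIdeal] using S.prec_bot_left b

lemma slantImp_eq_sSup_impIdeal {Aδ : Type*} [CompleteLattice Aδ] (C : CanExt A Aδ) (a b : A) :
    slantImp C S.prec a b = sSup (C.e '' S.impIdeal a b) := rfl

end SubordAlg

namespace CanExt

variable {A : Type*} [DistribLattice A] [BoundedOrder A] {Aδ : Type*} [CompleteLattice Aδ]
  (C : CanExt A Aδ)

lemma le_of_forall_isClosed_le {u v : Aδ} (h : ∀ k, C.IsClosed k → k ≤ u → k ≤ v) : u ≤ v := by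
  rw [C.dense_closed u]
  exact sSup_le fun k ⟨hk, hku⟩ => h k hk hku

lemma sSup_image_le_of_finite {I : Set A} (hI : I.Finite) :
    sSup (C.e '' I) ≤ C.e (hI.toFinset.sup id) :=
  sSup_le <| Set.forall_mem_image.2 fun _ hc =>
    (C.le_iff _ _).1 (Finset.le_sup (f := id) (hI.mem_toFinset.2 hc))

lemma exists_mem_le_of_isClosed_le_sSup (I : Order.Ideal A) {k : Aδ} (hk : C.IsClosed k)
    (h : k ≤ sSup (C.e '' I)) : ∃ c ∈ I, k ≤ C.e c := by
  obtain ⟨F, hF, rfl⟩ := hk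
  obtain ⟨F', I', hF'F, hI'I, -, hI', hle⟩ := C.compact F I hF I.nonempty h
  refine ⟨hI'.toFinset.sup id, ?_, ?_⟩
  · exact Finset.sup_induction I.bot_mem (fun _ hc _ hd => I.sup_mem hc hd)
      fun _ hc => hI'I (hI'.mem_toFinset.1 hc)
  · calc sInf (C.e '' F) ≤ sInf (C.e '' F') := sInf_le_sInf (Set.image_mono hF'F)
      _ ≤ sSup (C.e '' I') := hle
      _ ≤ C.e (hI'.toFinset.sup id) := C.sSup_image_le_of_finite hI'

lemma sSup_image_inf (I J : Order.Ideal A) :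
    sSup (C.e '' ↑(I ⊓ J)) = sSup (C.e '' I) ⊓ sSup (C.e '' J) := by
  refine le_antisymm (le_inf ?_ ?_) (C.le_of_forall_isClosed_le fun k hk hkIJ => ?_)
  · exact sSup_le_sSup (Set.image_mono inf_le_left)
  · exact sSup_le_sSup (Set.image_mono inf_le_right)
  obtain ⟨c, hcI, hkc⟩ := C.exists_mem_le_of_isClosed_le_sSup I hk (hkIJ.trans inf_le_left)
  obtain ⟨d, hdJ, hkd⟩ := C.exists_mem_le_of_isClosed_le_sSup J hk (hkIJ.trans inf_le_right)
  calc k ≤ C.e c ⊓ C.e d := le_inf hkc hkd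
    _ = C.e (c ⊓ d) := (C.map_inf c d).symm
    _ ≤ sSup (C.e '' ↑(I ⊓ J)) :=
      le_sSup ⟨c ⊓ d, Order.Ideal.mem_inf.2 ⟨I.lower inf_le_left hcI, J.lower inf_le_right hdJ⟩, rfl⟩

lemma sSup_image_top : sSup (C.e '' ↑(⊤ : Order.Ideal A)) = ⊤ :=
  top_unique <| C.map_top ▸ le_sSup ⟨⊤, trivial, rfl⟩

end CanExt

theorem stmt2 {A : Type*} [DistribLattice A] [BoundedOrder A]
    {Aδ : Type*} [CompleteLattice Aδ] (C : CanExt A Aδ) (S : SubordAlg A)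
    (a₁ a₂ b : A) :
    slantImp C S.prec (a₁ ⊔ a₂) b = slantImp C S.prec a₁ b ⊓ slantImp C S.prec a₂ b ∧
    slantImp C S.prec ⊥ b = ⊤ := by
  simp only [S.slantImp_eq_sSup_impIdeal C]
  exact ⟨by rw [S.impIdeal_sup_left, C.sSup_image_inf],
    by rw [S.impIdeal_bot_left, C.sSup_image_top]⟩
end

section
/- Let (A, ≺) be a subordination algebra with a ⇒_≺ b := ⋁{c | a ∧ c ≺ b}. Then the inequality (a ⇒_≺ b) ∧ (b ⇒_≺ c) ≤ a ⇒_≺ c holds in A^δ for all a, b, c ∈ A if and only if for all a, b, c, d ∈ A: a ∧ d ≺ b and b ∧ d ≺ c imply a ∧ d ≺ c. -/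
/-! By compactness of the canonical extension, a closed element lies below the open element
`a ⇒_≺ b = ⋁{d | a ∧ d ≺ b}` iff it lies below a single such `d`, because that set of `d`s is
an ideal by (OR) and (WO-SI). Closed elements are join-dense in `A^δ`, so the inequality
`(a ⇒_≺ b) ∧ (b ⇒_≺ c) ≤ a ⇒_≺ c` may be tested on them, i.e. on elements `d` of `A`, where it
becomes the stated transitivity condition with `d₁ ∧ d₂` as the common witness. -/

namespace CanExt

variable {A : Type*} [DistribLattice A] [BoundedOrder A] {Aδ : Type*} [CompleteLattice Aδ]
  (C : CanExt A Aδ)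

theorem e_mono : Monotone C.e := fun a b => (C.le_iff a b).mp

theorem exists_le_of_sInf_le_sSup {T : Set A} (hbot : ⊥ ∈ T) (hsup : SupClosed T) {F : Set A}
    (hF : F.Nonempty) (h : sInf (C.e '' F) ≤ sSup (C.e '' T)) :
    ∃ d ∈ T, sInf (C.e '' F) ≤ C.e d := by
  obtain ⟨F', I', hF'F, hI'T, -, hI'fin, hle⟩ := C.compact F T hF ⟨⊥, hbot⟩ h
  refine ⟨hI'fin.toFinset.sup id, Finset.sup_mem T hbot (fun x hx y hy => hsup hx hy) _ _
    (fun x hx => hI'T (hI'fin.mem_toFinset.mp hx)), ?_⟩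
  calc sInf (C.e '' F) ≤ sInf (C.e '' F') := sInf_le_sInf (Set.image_mono hF'F)
    _ ≤ sSup (C.e '' I') := hle
    _ ≤ C.e (hI'fin.toFinset.sup id) := sSup_le <| by
      rintro _ ⟨x, hx, rfl⟩
      exact C.e_mono (Finset.le_sup (f := id) (hI'fin.mem_toFinset.mpr hx))

theorem le_of_forall_sInf_le {u v : Aδ}
    (h : ∀ F : Set A, F.Nonempty → sInf (C.e '' F) ≤ u → sInf (C.e '' F) ≤ v) : u ≤ v := by
  rw [C.dense_closed u]
  exact sSup_le fun _ ⟨⟨F, hF, hk⟩, hku⟩ => hk ▸ h F hF (hk ▸ hku)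

end CanExt

namespace SubordAlg

variable {A : Type*} [DistribLattice A] [BoundedOrder A] (S : SubordAlg A)

theorem prec_inf_of_le {a b d d' : A} (hd : d ≤ d') (h : S.prec (a ⊓ d') b) :
    S.prec (a ⊓ d) b :=
  S.prec_wosi (inf_le_inf_left a hd) h le_rfl

theorem bot_mem_setOf_prec_inf (a b : A) : ⊥ ∈ {d | S.prec (a ⊓ d) b} :=
  S.prec_wosi inf_le_right S.prec_bot bot_le

theorem supClosed_setOf_prec_inf (a b : A) : SupClosed {d | S.prec (a ⊓ d) b} :=
  fun x hx y hy => by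
    simpa only [Set.mem_ofPred_eq, inf_sup_left] using S.prec_or hx hy

end SubordAlg

section SlantImp

variable {A : Type*} [DistribLattice A] [BoundedOrder A] {Aδ : Type*} [CompleteLattice Aδ]
  (C : CanExt A Aδ) (S : SubordAlg A)

theorem sInf_le_slantImp_iff {F : Set A} (hF : F.Nonempty) (a b : A) :
    sInf (C.e '' F) ≤ slantImp C S.prec a b ↔ ∃ d, S.prec (a ⊓ d) b ∧ sInf (C.e '' F) ≤ C.e d :=
  ⟨fun h => C.exists_le_of_sInf_le_sSup (S.bot_mem_setOf_prec_inf a b)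
      (S.supClosed_setOf_prec_inf a b) hF h,
    fun ⟨d, hd, hFd⟩ => hFd.trans (le_sSup ⟨d, hd, rfl⟩)⟩

theorem e_le_slantImp_iff (a b d : A) : C.e d ≤ slantImp C S.prec a b ↔ S.prec (a ⊓ d) b := by
  refine ⟨fun h => ?_, fun h => le_sSup ⟨d, h, rfl⟩⟩
  have hsingle := sInf_le_slantImp_iff C S (Set.singleton_nonempty d) a b
  simp only [Set.image_singleton, sInf_singleton] at hsingle
  obtain ⟨d', hd', hdd'⟩ := hsingle.mp h
  exact S.prec_inf_of_le ((C.le_iff d d').mpr hdd') hd'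

end SlantImp

theorem stmt16 {A : Type*} [DistribLattice A] [BoundedOrder A]
    {Aδ : Type*} [CompleteLattice Aδ] (C : CanExt A Aδ) (S : SubordAlg A) :
    (∀ a b c : A,
      slantImp C S.prec a b ⊓ slantImp C S.prec b c ≤ slantImp C S.prec a c) ↔
    (∀ a b c d : A, S.prec (a ⊓ d) b → S.prec (b ⊓ d) c → S.prec (a ⊓ d) c) := by
  constructor
  · intro h a b c d hab hbc
    rw [← e_le_slantImp_iff C] at hab hbc ⊢
    exact (le_inf hab hbc).trans (h a b c)
  · intro h a b c
    refine C.le_of_forall_sInf_le fun F hF hFle => ?_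
    obtain ⟨d₁, hd₁, hFd₁⟩ := (sInf_le_slantImp_iff C S hF a b).mp (le_inf_iff.mp hFle).1
    obtain ⟨d₂, hd₂, hFd₂⟩ := (sInf_le_slantImp_iff C S hF b c).mp (le_inf_iff.mp hFle).2
    refine (sInf_le_slantImp_iff C S hF a c).mpr ⟨d₁ ⊓ d₂, h a b c _ ?_ ?_, ?_⟩
    · exact S.prec_inf_of_le inf_le_left hd₁
    · exact S.prec_inf_of_le inf_le_right hd₂
    · exact C.map_inf d₁ d₂ ▸ le_inf hFd₁ hFd₂
end

section
/- Let (A, ≺) be a subordination algebra with a ⇒_≺ b := ⋁{c | a ∧ c ≺ b}. Then ⊤ ≤ (a ⇒_≺ b) ∨ (b ⇒_≺ a) holds in A^δ if and only if there exist e, f ∈ A with ⊤ ≤ e ∨ f, a ∧ e ≺ b, and b ∧ f ≺ a. -/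
/-! The two slanted implications are joins of the opens `e c` over the sets
`{c | a ⊓ c ≺ b}` and `{c | b ⊓ c ≺ a}`, each closed under finite joins by (⊥-⊤) and (OR).
By compactness, `⊤` below their join is already below a finite subjoin, and gathering its
members from each set gives `e` and `f`. -/

section

variable {A : Type*} [DistribLattice A] [BoundedOrder A]

theorem SubordAlg.prec_inf_bot (S : SubordAlg A) (a b : A) : S.prec (a ⊓ ⊥) b := by
  rw [inf_bot_eq]
  exact S.prec_wosi le_rfl S.prec_bot bot_le

theorem SubordAlg.prec_inf_sup (S : SubordAlg A) {a b c d : A} (hc : S.prec (a ⊓ c) b)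
    (hd : S.prec (a ⊓ d) b) : S.prec (a ⊓ (c ⊔ d)) b := by
  rw [inf_sup_left]
  exact S.prec_or hc hd

theorem SubordAlg.prec_inf_finset_sup (S : SubordAlg A) {a b : A} {s : Finset A}
    (hs : ∀ c ∈ s, S.prec (a ⊓ c) b) : S.prec (a ⊓ s.sup id) b :=
  Finset.sup_induction (p := fun x => S.prec (a ⊓ x) b) (S.prec_inf_bot a b) (fun _ hc _ hd => S.prec_inf_sup hc hd) hs

variable {Aδ : Type*} [CompleteLattice Aδ]

theorem CanExt.monotone (C : CanExt A Aδ) : Monotone C.e :=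
  fun a b => (C.le_iff a b).mp

theorem CanExt.exists_finset_le_sup_of_le_sSup (C : CanExt A Aδ) {a : A} {I : Set A}
    (hI : I.Nonempty) (h : C.e a ≤ sSup (C.e '' I)) :
    ∃ s : Finset A, ↑s ⊆ I ∧ a ≤ s.sup id := by
  obtain ⟨F, I', hF, hI', -, hI'fin, hle⟩ :=
    C.compact {a} I (Set.singleton_nonempty a) hI (by rwa [Set.image_singleton, sInf_singleton])
  refine ⟨hI'fin.toFinset, by rwa [Set.Finite.coe_toFinset], (C.le_iff _ _).mpr ?_⟩
  calc C.e a ≤ sInf (C.e '' F) :=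
        le_sInf (Set.forall_mem_image.mpr fun x hx => by rw [hF hx])
    _ ≤ sSup (C.e '' I') := hle
    _ ≤ C.e (hI'fin.toFinset.sup id) :=
        sSup_le (Set.forall_mem_image.mpr fun c hc =>
          C.monotone (Finset.le_sup (f := id) (hI'fin.mem_toFinset.mpr hc)))

theorem le_slantImp (C : CanExt A Aδ) {R : A → A → Prop} {a b c : A} (h : R (a ⊓ c) b) :
    C.e c ≤ slantImp C R a b :=
  le_sSup ⟨c, h, rfl⟩

end

theorem stmt17 {A : Type*} [DistribLattice A] [BoundedOrder A]
    {Aδ : Type*} [CompleteLattice Aδ] (C : CanExt A Aδ) (S : SubordAlg A)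
    (a b : A) :
    (⊤ : Aδ) ≤ slantImp C S.prec a b ⊔ slantImp C S.prec b a ↔
      ∃ e f : A, ⊤ ≤ e ⊔ f ∧ S.prec (a ⊓ e) b ∧ S.prec (b ⊓ f) a := by
  classical
  constructor
  · intro h
    set P : Set A := {c | S.prec (a ⊓ c) b}
    set Q : Set A := {c | S.prec (b ⊓ c) a}
    obtain ⟨s, hsPQ, hs⟩ := C.exists_finset_le_sup_of_le_sSup ⟨⊥, Or.inl (S.prec_inf_bot a b)⟩
      (by rwa [C.map_top, Set.image_union, sSup_union])
    -- Split `s` into its elements in `P` and the rest, which all lie in `Q`.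
    refine ⟨(s.filter (· ∈ P)).sup id, (s.filter (· ∉ P)).sup id, ?_,
      S.prec_inf_finset_sup fun c hc => (Finset.mem_filter.mp hc).2,
      S.prec_inf_finset_sup fun c hc => ?_⟩
    · rwa [← Finset.sup_union, Finset.filter_union_filter_not_eq]
    · obtain ⟨hcs, hcP⟩ := Finset.mem_filter.mp hc
      exact (hsPQ hcs).resolve_left hcP
  · rintro ⟨e, f, hef, he, hf⟩
    calc (⊤ : Aδ) = C.e (e ⊔ f) := by rw [top_le_iff.mp hef, C.map_top]
      _ = C.e e ⊔ C.e f := C.map_sup e f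
      _ ≤ _ := sup_le_sup (le_slantImp C he) (le_slantImp C hf)
end
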